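/- Let R be a commutative ℚ-algebra, N ≥ 1 an integer, and c_1,…,c_N ∈ R. In the formal power series ring R[[u,w]] set F := ∑_{k=1}^N c_k·u^k and G := ∑_{k=1}^N c_k·∑_{m≥0} binom(k+m−1, m)·u^{k+m}·w^m. (Writing u = z^{−1}, F corresponds to f(z) = ∑_k c_k z^{−k} and G to the expansion of f(z−w) in the domain |z| > |w|.) Both F and G lie in the ideal generated by u, so exp(−G) and exp(F) are well defined in R[[u,w]]. Then exp(−G)·exp(F) lies in R[u][[w]]; that is, for every m ≥ 0 the coefficient of w^m in exp(−G)·exp(F), a priori an element of R[[u]], is a polynomial in u. -/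

import Mathlib

/-!
STATEMENT 3.
Let R be a commutative ℚ-algebra, N ≥ 1 an integer, and c_1,…,c_N ∈ R.
In R[[u,w]] (= `MvPowerSeries (Fin 2) R`, with u the variable of index 0
and w the variable of index 1), set
  F := ∑_{k=1}^N c_k·u^k,
  G := ∑_{k=1}^N c_k·∑_{m≥0} C(k+m−1, m)·u^{k+m}·w^m
(G is defined coefficientwise below).  Both F and G lie in the ideal (u),
so exp(−G) and exp(F) are well defined; `expPS` below computes, for a series
with zero constant term, the sum ∑_{n≥0} f^n/n! (the truncation used is exact
in that case, since coeff_d (f^n) = 0 for n > |d|).  Then exp(−G)·exp(F) lies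
in R[u][[w]]: for every m ≥ 0 the coefficient of w^m is a polynomial in u,
i.e. only finitely many of its u-coefficients are nonzero.
-/

noncomputable section

variable (R : Type*) [CommRing R] [Algebra ℚ R]

/-- The exponential `∑_{n≥0} f^n / n!` of a power series `f` with zero constant
term (for such `f`, `coeff d (f^n) = 0` whenever `n > d 0 + d 1`, so the
truncated sum below equals the full exponential series). -/
def expPS (f : MvPowerSeries (Fin 2) R) : MvPowerSeries (Fin 2) R :=
  fun d => ∑ n ∈ Finset.range (d 0 + d 1 + 1),
    algebraMap ℚ R ((n.factorial : ℚ))⁻¹ * MvPowerSeries.coeff (R := R) d (f ^ n)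

/-- `F = ∑_{k=1}^N c_k u^k`. -/
def Fser (N : ℕ) (c : ℕ → R) : MvPowerSeries (Fin 2) R :=
  ∑ k ∈ Finset.Icc 1 N,
    MvPowerSeries.C (σ := Fin 2) (R := R) (c k) * MvPowerSeries.X (0 : Fin 2) ^ k

/-- `G = ∑_{k=1}^N c_k ∑_{m≥0} C(k+m−1, m) u^{k+m} w^m`, given coefficientwise:
the coefficient of `u^i w^m` is `C(i−1, m)·c_{i−m}` when `m+1 ≤ i` and
`i−m ≤ N`, and `0` otherwise. -/
def Gser (N : ℕ) (c : ℕ → R) : MvPowerSeries (Fin 2) R :=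
  fun d =>
    if d 1 + 1 ≤ d 0 ∧ d 0 - d 1 ≤ N then
      (Nat.choose (d 0 - 1) (d 1)) • c (d 0 - d 1)
    else 0

/-!
Since `exp` turns sums of series without constant term into products, exp(−G)·exp(F) = exp(F − G).
The `w`-free part of G is exactly F, so every monomial `u^i w^m` of F − G has `m ≥ 1` and
`i − m ≤ N`, hence `i ≤ (N + 1) m`. These exponents form an additive submonoid, so every power of
F − G, and with it exp(F − G), is supported on it: the coefficient of `u^i w^m` vanishes once
`i > (N + 1) m`.
-/

open MvPowerSeries Finset

namespace Finsupp

variable {M : Type*}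

theorem degree_fin_two [AddCommMonoid M] (d : Fin 2 →₀ M) : d.degree = d 0 + d 1 := by
  rw [degree_eq_sum, Fin.sum_univ_two]

theorem fin_two_eq_single_zero_iff [Zero M] (d : Fin 2 →₀ M) (k : M) :
    d = single 0 k ↔ d 0 = k ∧ d 1 = 0 := by
  refine ⟨fun h => by simp [h], fun ⟨h0, h1⟩ => ?_⟩
  ext i
  fin_cases i <;> simp [h0, h1]

end Finsupp

namespace MvPowerSeries

variable {σ S : Type*} [CommSemiring S]

theorem coeff_algebraMap_mul {K : Type*} [CommSemiring K] [Algebra K S] (q : K)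
    (f : MvPowerSeries σ S) (d : σ →₀ ℕ) :
    coeff d (algebraMap K (MvPowerSeries σ S) q * f) = algebraMap K S q * coeff d f := by
  rw [algebraMap_apply, coeff_C_mul]

theorem coeff_pow_eq_zero_of_degree_lt {f : MvPowerSeries σ S} (hf : constantCoeff f = 0)
    {n : ℕ} {d : σ →₀ ℕ} (hd : d.degree < n) : coeff d (f ^ n) = 0 :=
  coeff_of_lt_order ((Nat.cast_lt.mpr hd).trans_le (le_order_pow_of_constantCoeff_eq_zero n hf))

theorem coeff_pow_eq_zero_of_notMem (M : AddSubmonoid (σ →₀ ℕ)) {f : MvPowerSeries σ S}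
    (hf : ∀ d ∉ M, coeff d f = 0) (n : ℕ) {d : σ →₀ ℕ} (hd : d ∉ M) : coeff d (f ^ n) = 0 := by
  classical
  induction n generalizing d with
  | zero => rw [pow_zero, coeff_one, if_neg (fun h : d = 0 => hd (h ▸ M.zero_mem))]
  | succ n ih =>
    rw [pow_succ, coeff_mul]
    refine sum_eq_zero fun ⟨p, q⟩ hpq => ?_
    rw [HasAntidiagonal.mem_antidiagonal] at hpq
    by_cases hp : p ∈ M
    · have hq : q ∉ M := fun hq => hd (hpq ▸ M.add_mem hp hq)
      rw [hf q hq, mul_zero]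
    · rw [ih hp, zero_mul]

end MvPowerSeries

section ExpTrunc

variable {A : Type*} [CommRing A] [Algebra ℚ A]

def expTrunc (W : ℕ) (x : A) : A :=
  ∑ n ∈ range (W + 1), algebraMap ℚ A (1 / n.factorial) * x ^ n

theorem sum_antidiagonal_exp_terms (x y : A) (n : ℕ) :
    ∑ p ∈ antidiagonal n, algebraMap ℚ A (1 / p.1.factorial) * x ^ p.1 *
      (algebraMap ℚ A (1 / p.2.factorial) * y ^ p.2) =
      algebraMap ℚ A (1 / n.factorial) * (x + y) ^ n := by
  simpa [PowerSeries.coeff_mul, mul_comm] using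
    congrArg (PowerSeries.coeff n) (PowerSeries.exp_mul_exp_eq_exp_add x y)

theorem sum_range_sum_antidiagonal_eq_sum_filter {M : Type*} [AddCommMonoid M] (W : ℕ)
    (t : ℕ × ℕ → M) :
    ∑ n ∈ range (W + 1), ∑ p ∈ antidiagonal n, t p =
      ∑ p ∈ range (W + 1) ×ˢ range (W + 1) with p.1 + p.2 ≤ W, t p := by
  rw [← sum_fiberwise_of_maps_to (g := fun p : ℕ × ℕ => p.1 + p.2) (t := range (W + 1))
    fun p hp => mem_range_succ_iff.mpr (mem_filter.mp hp).2]
  refine sum_congr rfl fun n hn => sum_congr ?_ fun _ _ => rfl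
  ext ⟨a, b⟩
  rw [mem_range] at hn
  simp only [HasAntidiagonal.mem_antidiagonal, mem_filter, mem_product, mem_range]
  omega

theorem expTrunc_mul_expTrunc (W : ℕ) (x y : A) :
    expTrunc W x * expTrunc W y = expTrunc W (x + y) +
      ∑ p ∈ range (W + 1) ×ˢ range (W + 1) with W < p.1 + p.2,
        algebraMap ℚ A (1 / p.1.factorial) * x ^ p.1 *
          (algebraMap ℚ A (1 / p.2.factorial) * y ^ p.2) := by
  simp only [expTrunc, ← sum_antidiagonal_exp_terms, sum_range_sum_antidiagonal_eq_sum_filter,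
    not_lt.symm, sum_filter_not_add_sum_filter, sum_mul_sum, sum_product]

end ExpTrunc

section Exponential

variable {R}

theorem coeff_expPS (f : MvPowerSeries (Fin 2) R) (d : Fin 2 →₀ ℕ) :
    coeff d (expPS R f) = ∑ n ∈ range (d 0 + d 1 + 1),
      algebraMap ℚ R (n.factorial : ℚ)⁻¹ * coeff d (f ^ n) :=
  rfl

theorem coeff_expPS_eq_zero_of_notMem (M : AddSubmonoid (Fin 2 →₀ ℕ))
    {f : MvPowerSeries (Fin 2) R} (hf : ∀ d ∉ M, coeff d f = 0) {d : Fin 2 →₀ ℕ} (hd : d ∉ M) :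
    coeff d (expPS R f) = 0 := by
  rw [coeff_expPS]
  exact sum_eq_zero fun n _ => by rw [coeff_pow_eq_zero_of_notMem M hf n hd, mul_zero]

theorem coeff_expPS_eq_coeff_expTrunc {f : MvPowerSeries (Fin 2) R} (hf : constantCoeff f = 0)
    {d : Fin 2 →₀ ℕ} {W : ℕ} (hW : d.degree ≤ W) :
    coeff d (expPS R f) = coeff d (expTrunc W f) := by
  rw [Finsupp.degree_fin_two] at hW
  simp only [expTrunc, map_sum, coeff_algebraMap_mul, one_div]
  refine sum_subset (range_subset_range.mpr (by omega)) fun n _ hn => ?_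
  rw [mem_range, not_lt] at hn
  rw [coeff_pow_eq_zero_of_degree_lt hf (by rw [Finsupp.degree_fin_two]; omega), mul_zero]

theorem expPS_mul_expPS {f g : MvPowerSeries (Fin 2) R} (hf : constantCoeff f = 0)
    (hg : constantCoeff g = 0) : expPS R f * expPS R g = expPS R (f + g) := by
  ext d
  set W := d.degree
  have le_order_term {h : MvPowerSeries (Fin 2) R} (hh : constantCoeff h = 0) (n : ℕ) (q : ℚ) :
      (n : ℕ∞) ≤ order (algebraMap ℚ _ q * h ^ n) :=
    (le_order_pow_of_constantCoeff_eq_zero n hh).trans (le_add_self.trans le_order_mul)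
  calc coeff d (expPS R f * expPS R g) = coeff d (expTrunc W f * expTrunc W g) := by
        simp only [coeff_mul]
        refine sum_congr rfl fun p hp => ?_
        have hdeg : p.1.degree + p.2.degree = W := by
          rw [← map_add, HasAntidiagonal.mem_antidiagonal.mp hp]
        rw [coeff_expPS_eq_coeff_expTrunc hf (by omega : p.1.degree ≤ W),
          coeff_expPS_eq_coeff_expTrunc hg (by omega : p.2.degree ≤ W)]
    _ = coeff d (expTrunc W (f + g)) := by
        rw [expTrunc_mul_expTrunc, map_add, map_sum, sum_eq_zero, add_zero]
        intro p hp
        refine coeff_of_lt_order (lt_of_lt_of_le ?_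
          ((add_le_add (le_order_term hf _ _) (le_order_term hg _ _)).trans le_order_mul))
        exact_mod_cast (mem_filter.mp hp).2
    _ = coeff d (expPS R (f + g)) :=
        (coeff_expPS_eq_coeff_expTrunc (by rw [map_add, hf, hg, add_zero]) le_rfl).symm

end Exponential

def slopeCone (N : ℕ) : AddSubmonoid (Fin 2 →₀ ℕ) where
  carrier := {d | d 0 ≤ (N + 1) * d 1}
  zero_mem' := by simp
  add_mem' {a b} ha hb := by
    simp only [Set.mem_ofPred_eq, Finsupp.coe_add, Pi.add_apply, mul_add] at *
    omega

theorem mem_slopeCone {N : ℕ} {d : Fin 2 →₀ ℕ} : d ∈ slopeCone N ↔ d 0 ≤ (N + 1) * d 1 :=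
  Iff.rfl

section Series

variable {R : Type*} [CommRing R]

theorem coeff_Fser (N : ℕ) (c : ℕ → R) (d : Fin 2 →₀ ℕ) :
    coeff d (Fser R N c) = if d 0 ∈ Icc 1 N ∧ d 1 = 0 then c (d 0) else 0 := by
  simp only [Fser, map_sum, coeff_C_mul, coeff_X_pow, Finsupp.fin_two_eq_single_zero_iff, mul_ite,
    mul_one, mul_zero]
  by_cases h1 : d 1 = 0
  · simp [h1, sum_ite_eq]
  · simp [h1]

theorem coeff_Gser (N : ℕ) (c : ℕ → R) (d : Fin 2 →₀ ℕ) :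
    coeff d (Gser R N c) =
      if d 1 + 1 ≤ d 0 ∧ d 0 - d 1 ≤ N then (d 0 - 1).choose (d 1) • c (d 0 - d 1) else 0 :=
  rfl

theorem coeff_Fser_sub_Gser_eq_zero (N : ℕ) (c : ℕ → R) (d : Fin 2 →₀ ℕ)
    (hd : d ∉ slopeCone N) : coeff d (Fser R N c - Gser R N c) = 0 := by
  rw [mem_slopeCone, not_le] at hd
  rw [map_sub, coeff_Fser, coeff_Gser, sub_eq_zero]
  by_cases h1 : d 1 = 0
  · simp [h1]
  · have : N + d 1 < d 0 := by nlinarith [Nat.one_le_iff_ne_zero.mpr h1]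
    rw [if_neg fun h => h1 h.2, if_neg fun h => by omega]

end Series

theorem statement3 (N : ℕ) (c : ℕ → R) :
    ∀ m : ℕ, ∃ B : ℕ, ∀ i : ℕ, B ≤ i →
      MvPowerSeries.coeff (R := R) (Finsupp.single (0 : Fin 2) i + Finsupp.single (1 : Fin 2) m)
        (expPS R (-(Gser R N c)) * expPS R (Fser R N c)) = 0 := by
  intro m
  refine ⟨(N + 1) * m + 1, fun i hi => ?_⟩
  have hG : constantCoeff (-Gser R N c) = 0 := by
    rw [map_neg, ← coeff_zero_eq_constantCoeff_apply, coeff_Gser]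
    simp
  have hF : constantCoeff (Fser R N c) = 0 := by
    rw [← coeff_zero_eq_constantCoeff_apply, coeff_Fser]
    simp
  rw [expPS_mul_expPS hG hF, neg_add_eq_sub]
  refine coeff_expPS_eq_zero_of_notMem (slopeCone N) (coeff_Fser_sub_Gser_eq_zero N c) ?_
  simpa [mem_slopeCone] using hi

end
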